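/- Let H = p₁² + p₂² + b·q₂^(-2/3) on the region q₂ > 0 of ℝ⁴ with coordinates (q₁,q₂,p₁,p₂). Define X₄ = p₂³(q₂p₁ - q₁p₂) + p₂(3q₂p₁ - 2q₁p₂)·b·q₂^(-2/3) - b²q₁q₂^(-4/3). Then the canonical Poisson bracket {H, X₄} = ∂H/∂q₁·∂X₄/∂p₁ + ∂H/∂q₂·∂X₄/∂p₂ - ∂H/∂p₁·∂X₄/∂q₁ - ∂H/∂p₂·∂X₄/∂q₂ vanishes identically. -/

import Mathlib

/-- Canonical Poisson bracket on ℝ⁴ with coordinates (q₁,q₂,p₁,p₂). -/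
noncomputable def pb (F G : ℝ → ℝ → ℝ → ℝ → ℝ) (q1 q2 p1 p2 : ℝ) : ℝ :=
  deriv (fun x => F x q2 p1 p2) q1 * deriv (fun x => G q1 q2 x p2) p1
  + deriv (fun x => F q1 x p1 p2) q2 * deriv (fun x => G q1 q2 p1 x) p2
  - deriv (fun x => F q1 q2 x p2) p1 * deriv (fun x => G x q2 p1 p2) q1
  - deriv (fun x => F q1 q2 p1 x) p2 * deriv (fun x => G q1 x p1 p2) q2

noncomputable def H (b : ℝ) (q1 q2 p1 p2 : ℝ) : ℝ :=
  p1 ^ 2 + p2 ^ 2 + b * q2 ^ (-(2 : ℝ) / 3)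

noncomputable def X4 (b : ℝ) (q1 q2 p1 p2 : ℝ) : ℝ :=
  p2 ^ 3 * (q2 * p1 - q1 * p2)
  + p2 * (3 * q2 * p1 - 2 * q1 * p2) * b * q2 ^ (-(2 : ℝ) / 3)
  - b ^ 2 * q1 * q2 ^ (-(4 : ℝ) / 3)

/-!
Writing `r = q₂^(-2/3)`, one has `q₂^(-4/3) = r²` and `∂r/∂q₂ = -(2/3) r / q₂`, so every partial
derivative of `H` and `X₄` is a polynomial in `q₁, p₁, p₂, r, q₂, q₂⁻¹`, and the bracket vanishes
as an identity of rational functions in these, with `r` treated as an independent variable.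
-/

theorem Real.rpow_neg_four_thirds_eq_sq {x : ℝ} (hx : 0 ≤ x) :
    x ^ (-(4 : ℝ) / 3) = (x ^ (-(2 : ℝ) / 3)) ^ 2 := by
  rw [← Real.rpow_mul_natCast hx]
  norm_num

section PartialDerivatives

variable (b q1 q2 p1 p2 : ℝ)

theorem deriv_H_q1 : deriv (fun x => H b x q2 p1 p2) q1 = 0 := by
  simp [H]

theorem deriv_H_q2 (hq2 : q2 ≠ 0) :
    deriv (fun x => H b q1 x p1 p2) q2 = -(2 / 3) * b * q2 ^ (-(2 : ℝ) / 3) / q2 := by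
  simp (disch := fun_prop (disch := assumption)) [H, Real.deriv_rpow_const, Real.rpow_sub_one hq2]
  ring

theorem deriv_H_p1 : deriv (fun x => H b q1 q2 x p2) p1 = 2 * p1 := by
  simp [H]

theorem deriv_H_p2 : deriv (fun x => H b q1 q2 p1 x) p2 = 2 * p2 := by
  simp [H]

theorem deriv_X4_q1 : deriv (fun x => X4 b x q2 p1 p2) q1 =
    -p2 ^ 4 - 2 * b * p2 ^ 2 * q2 ^ (-(2 : ℝ) / 3) - b ^ 2 * q2 ^ (-(4 : ℝ) / 3) := by
  simp (disch := fun_prop) [X4]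
  ring

theorem deriv_X4_q2 (hq2 : q2 ≠ 0) : deriv (fun x => X4 b q1 x p1 p2) q2 =
    p1 * p2 ^ 3 + 3 * b * p1 * p2 * q2 ^ (-(2 : ℝ) / 3)
      - 2 / 3 * b * p2 * (3 * q2 * p1 - 2 * q1 * p2) * q2 ^ (-(2 : ℝ) / 3) / q2
      + 4 / 3 * b ^ 2 * q1 * q2 ^ (-(4 : ℝ) / 3) / q2 := by
  simp (disch := fun_prop (disch := assumption)) [X4, Real.deriv_rpow_const,
    Real.rpow_sub_one hq2]
  ring

theorem deriv_X4_p1 : deriv (fun x => X4 b q1 q2 x p2) p1 =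
    q2 * p2 ^ 3 + 3 * b * q2 * p2 * q2 ^ (-(2 : ℝ) / 3) := by
  simp (disch := fun_prop) [X4]
  ring

theorem deriv_X4_p2 : deriv (fun x => X4 b q1 q2 p1 x) p2 =
    3 * p2 ^ 2 * (q2 * p1 - q1 * p2) - q1 * p2 ^ 3
      + b * (3 * q2 * p1 - 4 * q1 * p2) * q2 ^ (-(2 : ℝ) / 3) := by
  simp (disch := fun_prop) [X4]
  ring

end PartialDerivatives

theorem stmt0 (b : ℝ) (q1 q2 p1 p2 : ℝ) (hq2 : 0 < q2) :
    pb (H b) (X4 b) q1 q2 p1 p2 = 0 := by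
  rw [pb, deriv_H_q1, deriv_H_q2 _ _ _ _ _ hq2.ne', deriv_H_p1, deriv_H_p2, deriv_X4_q1,
    deriv_X4_q2 _ _ _ _ _ hq2.ne', deriv_X4_p1, deriv_X4_p2,
    Real.rpow_neg_four_thirds_eq_sq hq2.le]
  field_simp
  ring
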